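/- arXiv:0910.4789 — 5 statements merged into one kernel-verified Lean document; each statement's English description precedes it below -/
import Mathlib

section
/- If the finite simplicial graph Γ contains two distinct vertices x, y with x ≥ y and y ≥ x (a domination-equivalent pair), then Out(A_Γ) contains a subgroup isomorphic to the free group of rank 2. -/
open SimpleGraph
open scoped commutatorElement

variable {V : Type*}

/-- The link of a vertex: the set of adjacent vertices. -/
def lk (G : SimpleGraph V) (x : V) : Set V := {z | G.Adj x z}

/-- The star of a vertex: the link together with the vertex itself. -/
def st (G : SimpleGraph V) (x : V) : Set V := insert x (lk G x)

/-- `Dominates G y x` means `y ≥ x`, i.e. `lk x ⊆ st y`. -/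
def Dominates (G : SimpleGraph V) (y x : V) : Prop := lk G x ⊆ st G y

/-- `Γ` contains a domination-equivalent pair of (distinct) vertices. -/
def DomEquivPair (G : SimpleGraph V) : Prop :=
  ∃ x y : V, x ≠ y ∧ Dominates G x y ∧ Dominates G y x

/-- `S` separates `u` from `v`: both lie outside `S` and they are not joined by a path
in the induced subgraph on the complement of `S`. -/
def SeparatesFrom (G : SimpleGraph V) (S : Set V) (u v : V) : Prop :=
  ∃ (hu : u ∈ Sᶜ) (hv : v ∈ Sᶜ),
    ¬ (G.induce Sᶜ).Reachable ⟨u, hu⟩ ⟨v, hv⟩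

/-- `Γ` has a separating intersection of links: there are distinct non-adjacent vertices
`x, y` and a vertex `z` whose connected component in the induced subgraph on the
complement of `lk x ∩ lk y` contains neither `x` nor `y`. -/
def SepIntLinks (G : SimpleGraph V) : Prop :=
  ∃ x y : V, x ≠ y ∧ ¬ G.Adj x y ∧ ∃ z : V,
    SeparatesFrom G (lk G x ∩ lk G y) z x ∧ SeparatesFrom G (lk G x ∩ lk G y) z y

/-- `Y` is the vertex set of a connected component of the induced subgraph on `S`. -/
def IsCompOf (G : SimpleGraph V) (S : Set V) (Y : Set V) : Prop :=
  Y.Nonempty ∧ Y ⊆ S ∧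
    ∀ a : S, a.1 ∈ Y → ∀ b : S, ((G.induce S).Reachable a b ↔ b.1 ∈ Y)

/-- The defining relators of the right-angled Artin group of `G`. -/
def raagRels (G : SimpleGraph V) : Set (FreeGroup V) :=
  {r | ∃ x y : V, G.Adj x y ∧ r = ⁅FreeGroup.of x, FreeGroup.of y⁆}

/-- The right-angled Artin group of a graph. -/
abbrev RAAG (G : SimpleGraph V) : Type _ := PresentedGroup (raagRels G)

/-- The generator of the RAAG corresponding to a vertex. -/
def gen (G : SimpleGraph V) (x : V) : RAAG G := PresentedGroup.of x

/-- The subgroup of inner automorphisms. -/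
def Inn (H : Type*) [Group H] : Subgroup (MulAut H) := (MulAut.conj : H →* MulAut H).range

instance Inn.normal (H : Type*) [Group H] : (Inn H).Normal := by
  constructor
  intro n hn g
  obtain ⟨h, rfl⟩ := hn
  refine ⟨g h, ?_⟩
  ext x
  simp [MulAut.conj]

/-- The outer automorphism group `Out(A_Γ)` of the RAAG of `G`. -/
abbrev OutG (G : SimpleGraph V) := MulAut (RAAG G) ⧸ Inn (RAAG G)

/-- A group contains a subgroup isomorphic to the free group of rank 2. -/
def HasFreeRankTwo (H : Type*) [Group H] : Prop :=
  ∃ K : Subgroup H, Nonempty (↥K ≃* FreeGroup (Fin 2))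

/-- A group is virtually nilpotent. -/
def VirtNilpotent (H : Type*) [Group H] : Prop :=
  ∃ K : Subgroup H, K.FiniteIndex ∧ Group.IsNilpotent ↥K

/-- `φ` is a transvection with multiplier `x^ε` acting on the generator `y`
(either a right or a left transvection). -/
def IsTransvection (G : SimpleGraph V) (φ : MulAut (RAAG G)) (x y : V) (ε : ℤ) : Prop :=
  x ≠ y ∧ Dominates G x y ∧ (ε = 1 ∨ ε = -1) ∧
  (φ (gen G y) = gen G y * (gen G x) ^ ε ∨ φ (gen G y) = (gen G x) ^ ε * gen G y) ∧
  ∀ z : V, z ≠ y → φ (gen G z) = gen G z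

/-- `φ` is a non-inner partial conjugation with multiplier `x^ε`, conjugating exactly the
generators in the connected component `Y` of the complement of `st x`. -/
def IsPartialConj (G : SimpleGraph V) (φ : MulAut (RAAG G)) (x : V) (ε : ℤ) (Y : Set V) : Prop :=
  (ε = 1 ∨ ε = -1) ∧ IsCompOf G ((st G x)ᶜ) Y ∧ ((st G x ∪ Y)ᶜ).Nonempty ∧
  (∀ y ∈ Y, φ (gen G y) = (gen G x) ^ (-ε) * gen G y * (gen G x) ^ ε) ∧
  ∀ z : V, z ∉ Y → φ (gen G z) = gen G z

/-- A domination chain, listed with the dominant member first. -/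
def IsDomChain (G : SimpleGraph V) (l : List V) : Prop :=
  l ≠ [] ∧ l.Nodup ∧ l.Chain' (fun a b => Dominates G a b)

/-- The domination depth of a vertex: the maximal length of a domination chain with
top member `x`. -/
noncomputable def domDepth (G : SimpleGraph V) (x : V) : ℕ :=
  sSup {n | ∃ l : List V, IsDomChain G l ∧ l.head? = some x ∧ l.length = n + 1}

/-- A star-separation preserving domination chain with top member `xm` and
bottom member `x1`. -/
def IsSSPChain (G : SimpleGraph V) (l : List V) (xm x1 : V) : Prop :=
  IsDomChain G l ∧ l.head? = some xm ∧ l.getLast? = some x1 ∧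
  ∃ Y1 Y2 : Set V, IsCompOf G ((st G x1)ᶜ) Y1 ∧ IsCompOf G ((st G x1)ᶜ) Y2 ∧
    Y1 ≠ Y2 ∧ ¬ Y1 ⊆ st G xm ∧ ¬ Y2 ⊆ st G xm

/-- The star-separation depth of a vertex: `1 +` the maximal length of a star-separation
preserving chain with top member `x` (this is `0` if there is no such chain, as then the
set below is empty). -/
noncomputable def ssDepth (G : SimpleGraph V) (x : V) : ℕ :=
  sSup {n | ∃ (l : List V) (x1 : V), IsSSPChain G l x x1 ∧ l.length = n}

/-- The depth of a vertex. -/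
noncomputable def vdepth (G : SimpleGraph V) (x : V) : ℕ := max (domDepth G x) (ssDepth G x)

/-- The depth of the graph `G`. -/
noncomputable def gdepth (G : SimpleGraph V) : ℕ := sSup {n | ∃ x : V, n = vdepth G x}

/-- The set of images in `Out(A_Γ)` of all transvections and all non-inner partial
conjugations. -/
def TvPcSet (G : SimpleGraph V) : Set (OutG G) :=
  {g | ∃ φ : MulAut (RAAG G), (QuotientGroup.mk φ : OutG G) = g ∧
    ((∃ x y ε, IsTransvection G φ x y ε) ∨ (∃ x ε Y, IsPartialConj G φ x ε Y))}

/-- The subgroup `N` of `Out(A_Γ)` generated by the images of all transvections and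
all non-inner partial conjugations. -/
def Ngrp (G : SimpleGraph V) : Subgroup (OutG G) := Subgroup.closure (TvPcSet G)

/-!
The transvections `y ↦ y x²` and `x ↦ x y²` exist because `x` and `y` dominate each other. On
the exponent sums of `x` and `y` (a quotient `ℤ²` of the abelianization) they act by the shears
`[[1, 2], [0, 1]]` and `[[1, 0], [2, 1]]`, which generate a free group of rank two by Sanov's
ping-pong argument. Inner automorphisms act trivially on any abelian quotient, so the images of the
two transvections in `Out(A_Γ)` still generate a free group.
-/

theorem Function.Semiconj.freeGroupLift {ι K A R : Type*} [Group K] [Semiring R]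
    [AddCommMonoid A] [Module R A] {f : K → A} {b : ι → MulAut K} {a : ι → A ≃ₗ[R] A}
    (h : ∀ i, Function.Semiconj f (b i) (a i)) (w : FreeGroup ι) :
    Function.Semiconj f (FreeGroup.lift b w) (FreeGroup.lift a w) := by
  induction w with
  | C1 => simpa using Function.Semiconj.id_right
  | of i => simpa using h i
  | inv_of w hw =>
    rw [map_inv, map_inv]
    exact hw.inverses_right (fun k => by simp) (fun v => by simp)
  | mul v w hv hw =>
    rw [map_mul, map_mul]
    exact hv.comp_right hw

theorem injective_outer_of_semiconj {F K A R : Type*} [Group F] [Group K] [Semiring R]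
    [AddCommGroup A] [Module R A] (φ : F →* MulAut K) (ρ : F →* A ≃ₗ[R] A)
    (hρ : Function.Injective ρ) (p : K →* Multiplicative A) (hp : Function.Surjective p)
    (h : ∀ w, Function.Semiconj (fun k => (p k).toAdd) (φ w) (ρ w)) :
    Function.Injective ((QuotientGroup.mk' (Inn K)).comp φ) := by
  rw [injective_iff_map_eq_one]
  intro w hw
  obtain ⟨g, hg⟩ : φ w ∈ Inn K := (QuotientGroup.eq_one_iff _).1 hw
  suffices ρ w = 1 from hρ (this.trans (map_one ρ).symm)
  ext a
  obtain ⟨k, hk⟩ := hp (.ofAdd a)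
  show ρ w a = a
  rw [← toAdd_ofAdd a, ← hk, ← h w k, ← hg]
  simp [MulAut.conj_apply, mul_comm (p g)]

theorem hasFreeRankTwo_of_injective {H : Type*} [Group H] {f : FreeGroup (Fin 2) →* H}
    (hf : Function.Injective f) : HasFreeRankTwo H :=
  ⟨f.range, ⟨(MonoidHom.ofInjective hf).symm⟩⟩

def SubMulAction.nonzero (M A : Type*) [Group M] [AddMonoid A] [DistribMulAction M A] :
    SubMulAction M A where
  carrier := {a | a ≠ 0}
  smul_mem' g _ ha := (smul_ne_zero_iff_ne g).2 ha

@[simp]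
theorem SubMulAction.mem_nonzero {M A : Type*} [Group M] [AddMonoid A] [DistribMulAction M A]
    {a : A} : a ∈ SubMulAction.nonzero M A ↔ a ≠ 0 :=
  Iff.rfl

def shearFst (k : ℤ) : (ℤ × ℤ) ≃ₗ[ℤ] ℤ × ℤ :=
  LinearEquiv.transvection (f := k • LinearMap.snd ℤ ℤ ℤ) (v := (1, 0)) (by simp)

def shearSnd (k : ℤ) : (ℤ × ℤ) ≃ₗ[ℤ] ℤ × ℤ :=
  LinearEquiv.transvection (f := k • LinearMap.fst ℤ ℤ ℤ) (v := (0, 1)) (by simp)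

@[simp]
theorem shearFst_apply (k : ℤ) (v : ℤ × ℤ) : shearFst k v = (v.1 + k * v.2, v.2) := by
  simp [shearFst, LinearMap.transvection.apply, Prod.ext_iff]

@[simp]
theorem shearSnd_apply (k : ℤ) (v : ℤ × ℤ) : shearSnd k v = (v.1, v.2 + k * v.1) := by
  simp [shearSnd, LinearMap.transvection.apply, Prod.ext_iff]

@[simp]
theorem inv_shearFst (k : ℤ) : (shearFst k)⁻¹ = shearFst (-k) := by
  rw [inv_eq_iff_mul_eq_one]
  ext v <;> simp

@[simp]
theorem inv_shearSnd (k : ℤ) : (shearSnd k)⁻¹ = shearSnd (-k) := by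
  rw [inv_eq_iff_mul_eq_one]
  ext v <;> simp

theorem injective_lift_shearFst_shearSnd :
    Function.Injective (FreeGroup.lift ![shearFst 2, shearSnd 2]) := by
  -- Sanov's regions, cut by sign. The generators and their inverses exchange the lines `m = n`
  -- and `m = -n`, which forces the first into `X 1` and the second into `Y 0`.
  let X : Fin 2 → Set (ℤ × ℤ) := ![
    {v | v.2.natAbs < v.1.natAbs ∧ (0 ≤ v.1 ∧ 0 ≤ v.2 ∨ v.1 ≤ 0 ∧ v.2 ≤ 0)},
    {v | v.1.natAbs < v.2.natAbs ∧ (0 ≤ v.1 ∧ 0 ≤ v.2 ∨ v.1 ≤ 0 ∧ v.2 ≤ 0) ∨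
      v.1 = v.2 ∧ v.1 ≠ 0}]
  let Y : Fin 2 → Set (ℤ × ℤ) := ![
    {v | v.2.natAbs ≤ v.1.natAbs ∧ (0 < v.1 ∧ v.2 < 0 ∨ v.1 < 0 ∧ 0 < v.2)},
    {v | v.1.natAbs < v.2.natAbs ∧ (0 < v.1 ∧ v.2 < 0 ∨ v.1 < 0 ∧ 0 < v.2)}]
  refine FreeGroup.injective_lift_of_ping_pong
    (α := SubMulAction.nonzero ((ℤ × ℤ) ≃ₗ[ℤ] ℤ × ℤ) (ℤ × ℤ)) _
    (fun i => Subtype.val ⁻¹' X i) (fun i => Subtype.val ⁻¹' Y i) ?_ ?_ ?_ ?_ ?_ ?_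
  · intro i
    fin_cases i
    exacts [⟨⟨(1, 0), by simp⟩, by simp [X]⟩,
      ⟨⟨(0, 1), by simp⟩, by simp [X]⟩]
  · intro i j hij
    fin_cases i <;> fin_cases j <;> simp_all [X, Set.disjoint_left] <;> omega
  · intro i j hij
    fin_cases i <;> fin_cases j <;> simp_all [Y, Set.disjoint_left]
  · intro i j
    fin_cases i <;> fin_cases j <;> simp [X, Y, Set.disjoint_left] <;> omega
  all_goals
    rintro i _ ⟨⟨⟨m, n⟩, hmn⟩, hw, rfl⟩
    replace hmn : ¬(m = 0 ∧ n = 0) := by simpa [Prod.ext_iff] using hmn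
    fin_cases i <;> simp [X, Y] at hw ⊢ <;> omega

namespace RAAG

variable {G : SimpleGraph V}

theorem gen_commute_of_adj {a b : V} (h : G.Adj a b) : Commute (gen G a) (gen G b) := by
  rw [← commutatorElement_eq_one_iff_commute]
  exact (map_commutatorElement (PresentedGroup.mk _) _ _).symm.trans
    (PresentedGroup.one_of_mem ⟨a, b, h, rfl⟩)

variable {H : Type*} [Group H]

def lift (f : V → H) (hf : ∀ a b, G.Adj a b → Commute (f a) (f b)) : RAAG G →* H :=
  PresentedGroup.toGroup (rels := raagRels G) (f := f) <| by
    rintro _ ⟨a, b, hab, rfl⟩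
    rw [map_commutatorElement, commutatorElement_eq_one_iff_commute]
    simpa using hf a b hab

@[simp]
theorem lift_gen (f : V → H) (hf : ∀ a b, G.Adj a b → Commute (f a) (f b)) (z : V) :
    lift f hf (gen G z) = f z :=
  PresentedGroup.toGroup.of _

theorem hom_ext {φ ψ : RAAG G →* H} (h : ∀ z, φ (gen G z) = ψ (gen G z)) : φ = ψ :=
  PresentedGroup.ext h

theorem semiconj_of_gen {A Φ F : Type*} [AddCommGroup A]
    [FunLike Φ (RAAG G) (RAAG G)] [MonoidHomClass Φ (RAAG G) (RAAG G)]
    [FunLike F A A] [AddMonoidHomClass F A A]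
    (p : RAAG G →* Multiplicative A) (φ : Φ) (e : F)
    (h : ∀ z, (p (φ (gen G z))).toAdd = e (p (gen G z)).toAdd) :
    Function.Semiconj (fun g => (p g).toAdd) φ e := fun g =>
  congrArg Multiplicative.toAdd <| DFunLike.congr_fun
    (hom_ext (φ := p.comp (φ : RAAG G →* RAAG G))
      (ψ := (AddMonoidHom.toMultiplicative (e : A →+ A)).comp p) h) g

end RAAG

section Transvection

variable {G : SimpleGraph V} {x y : V}

open Classical in
noncomputable def transvectionHom (hdom : Dominates G x y) (k : ℤ) : RAAG G →* RAAG G :=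
  RAAG.lift (Function.update (gen G) y (gen G y * gen G x ^ k)) <| by
    have hcomm : ∀ a, G.Adj a y → Commute (gen G a) (gen G y * gen G x ^ k) := fun a hay =>
      (RAAG.gen_commute_of_adj hay).mul_right <| by
        rcases hdom hay.symm with rfl | hxa
        · exact (Commute.refl _).zpow_right k
        · exact (RAAG.gen_commute_of_adj hxa).symm.zpow_right k
    intro a b hab
    rcases eq_or_ne a y with rfl | ha
    · simpa [Function.update_of_ne hab.ne'] using (hcomm b hab.symm).symm
    rcases eq_or_ne b y with rfl | hb
    · simpa [Function.update_of_ne ha] using hcomm a hab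
    · simpa [Function.update_of_ne ha, Function.update_of_ne hb] using RAAG.gen_commute_of_adj hab

open Classical in
theorem transvectionHom_gen (hdom : Dominates G x y) (k : ℤ) (z : V) :
    transvectionHom hdom k (gen G z) = Function.update (gen G) y (gen G y * gen G x ^ k) z :=
  RAAG.lift_gen _ _ z

theorem transvectionHom_neg_comp (hxy : x ≠ y) (hdom : Dominates G x y) (k : ℤ) :
    (transvectionHom hdom (-k)).comp (transvectionHom hdom k) = MonoidHom.id _ := by
  refine RAAG.hom_ext fun z => ?_
  rcases eq_or_ne z y with rfl | hz
  · simp [transvectionHom_gen, hxy, mul_assoc]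
  · simp [transvectionHom_gen, hz]

noncomputable def transvection (hxy : x ≠ y) (hdom : Dominates G x y) (k : ℤ) :
    MulAut (RAAG G) :=
  (transvectionHom hdom k).toMulEquiv (transvectionHom hdom (-k))
    (transvectionHom_neg_comp hxy hdom k) (by simpa using transvectionHom_neg_comp hxy hdom (-k))

open Classical in
theorem transvection_gen (hxy : x ≠ y) (hdom : Dominates G x y) (k : ℤ) (z : V) :
    transvection hxy hdom k (gen G z) = Function.update (gen G) y (gen G y * gen G x ^ k) z :=
  transvectionHom_gen hdom k z

end Transvection

section CoordProj

variable {G : SimpleGraph V} {x y : V}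

open Classical in
noncomputable def coordProj (G : SimpleGraph V) (x y : V) : RAAG G →* Multiplicative (ℤ × ℤ) :=
  RAAG.lift (fun z => .ofAdd (if z = x then 1 else 0, if z = y then 1 else 0))
    fun _ _ _ => Commute.all _ _

theorem coordProj_surjective (hxy : x ≠ y) : Function.Surjective (coordProj G x y) := by
  intro v
  refine ⟨gen G x ^ v.toAdd.1 * gen G y ^ v.toAdd.2, ?_⟩
  simp [coordProj, hxy, hxy.symm, ← ofAdd_zsmul, ← ofAdd_add]

theorem semiconj_coordProj_transvection (hxy : x ≠ y) (hdom : Dominates G x y) (k : ℤ) :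
    Function.Semiconj (fun g => (coordProj G x y g).toAdd) (transvection hxy hdom k)
      (shearFst k) := by
  refine RAAG.semiconj_of_gen _ _ _ fun z => ?_
  rcases eq_or_ne z y with rfl | hz
  · simp [transvection_gen, coordProj, hxy]
  · simp [transvection_gen, coordProj, hz]

theorem semiconj_coordProj_transvection_symm (hxy : x ≠ y) (hdom : Dominates G y x) (k : ℤ) :
    Function.Semiconj (fun g => (coordProj G x y g).toAdd) (transvection hxy.symm hdom k)
      (shearSnd k) := by
  refine RAAG.semiconj_of_gen _ _ _ fun z => ?_
  rcases eq_or_ne z x with rfl | hz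
  · simp [transvection_gen, coordProj, hxy.symm]
  · simp [transvection_gen, coordProj, hz]

end CoordProj

theorem out_hasFreeRankTwo_of_domEquivPair_general (G : SimpleGraph V) (x y : V)
    (hxy : x ≠ y) (h1 : Dominates G x y) (h2 : Dominates G y x) :
    HasFreeRankTwo (OutG G) := by
  let φ := FreeGroup.lift ![transvection hxy h1 2, transvection hxy.symm h2 2]
  have hsemi : ∀ w, Function.Semiconj (fun g => (coordProj G x y g).toAdd) (φ w)
      (FreeGroup.lift ![shearFst 2, shearSnd 2] w) :=
    Function.Semiconj.freeGroupLift <| Fin.forall_fin_two.2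
      ⟨semiconj_coordProj_transvection hxy h1 2, semiconj_coordProj_transvection_symm hxy h2 2⟩
  exact hasFreeRankTwo_of_injective <| injective_outer_of_semiconj φ _
    injective_lift_shearFst_shearSnd _ (coordProj_surjective hxy) hsemi

/-- If `Γ` contains two distinct vertices `x, y` with `x ≥ y` and
`y ≥ x`, then `Out(A_Γ)` contains a free subgroup of rank 2. -/
theorem out_hasFreeRankTwo_of_domEquivPair [Fintype V] (G : SimpleGraph V) (x y : V)
    (hxy : x ≠ y) (h1 : Dominates G x y) (h2 : Dominates G y x) :
    HasFreeRankTwo (OutG G) :=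
  out_hasFreeRankTwo_of_domEquivPair_general G x y hxy h1 h2
end

section
/- Suppose x, y are non-adjacent vertices of the finite simplicial graph Γ with x ≥ y, and st(y) separates Γ (i.e. the induced subgraph on the complement of st(y) is disconnected, with at least two connected components). Then Γ contains a separating intersection of links. -/
open SimpleGraph

variable {V : Type*}

open scoped commutatorElement

/-!
Since `x` and `y` are not adjacent, `x ≥ y` means `lk y ⊆ lk x`, so `lk x ∩ lk y = lk y`.
In the complement of `lk y` the vertex `y` is isolated, and the other vertices are connected
exactly as in the complement of `st y`. A vertex `z` of a component of the complement of
`st y` that misses `x` is therefore separated by `lk x ∩ lk y` from both `x` and `y`.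
-/

section

variable {G : SimpleGraph V}

lemma lk_subset_lk_of_dominates {x y : V} (hadj : ¬ G.Adj x y) (hdom : Dominates G x y) :
    lk G y ⊆ lk G x := fun _ hz =>
  (hdom hz).resolve_left fun hzx => hadj (hzx ▸ hz : G.Adj y x).symm

lemma IsCompOf.eq_of_mem {S Y₁ Y₂ : Set V} (h₁ : IsCompOf G S Y₁) (h₂ : IsCompOf G S Y₂)
    {v : V} (hv₁ : v ∈ Y₁) (hv₂ : v ∈ Y₂) : Y₁ = Y₂ := by
  have hvS : v ∈ S := h₁.2.1 hv₁
  ext b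
  constructor
  · intro hb
    exact (h₂.2.2 ⟨v, hvS⟩ hv₂ ⟨b, h₁.2.1 hb⟩).mp ((h₁.2.2 ⟨v, hvS⟩ hv₁ _).mpr hb)
  · intro hb
    exact (h₁.2.2 ⟨v, hvS⟩ hv₁ ⟨b, h₂.2.1 hb⟩).mp ((h₂.2.2 ⟨v, hvS⟩ hv₂ _).mpr hb)

lemma exists_isCompOf_not_mem {S : Set V}
    (h : ∃ Y₁ Y₂ : Set V, IsCompOf G S Y₁ ∧ IsCompOf G S Y₂ ∧ Y₁ ≠ Y₂) (v : V) :
    ∃ Y, IsCompOf G S Y ∧ v ∉ Y := by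
  obtain ⟨Y₁, Y₂, h₁, h₂, hne⟩ := h
  by_cases hv₁ : v ∈ Y₁
  · exact ⟨Y₂, h₂, fun hv₂ => hne (h₁.eq_of_mem h₂ hv₁ hv₂)⟩
  · exact ⟨Y₁, h₁, hv₁⟩

variable {S : Set V} {y : V}

lemma not_reachable_induce_compl_of_lk_subset (hy : lk G y ⊆ S) (hyS : y ∉ S) {u : ↥Sᶜ}
    (hu : u.1 ≠ y) : ¬ (G.induce Sᶜ).Reachable u ⟨y, hyS⟩ := by
  rintro ⟨p⟩
  cases p.reverse with
  | nil => exact hu rfl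
  | @cons _ v _ h _ => exact v.2 (hy (comap_adj.mp h))

lemma reachable_induce_compl_insert (hy : lk G y ⊆ S) {u w : ↥Sᶜ}
    (h : (G.induce Sᶜ).Reachable u w) (hu : u.1 ≠ y) (hw : w.1 ≠ y) :
    (G.induce (insert y S)ᶜ).Reachable
      ⟨u, fun hm => hm.elim hu u.2⟩ ⟨w, fun hm => hm.elim hw w.2⟩ := by
  obtain ⟨p⟩ := h
  induction p with
  | nil => rfl
  | @cons u v w h _ ih =>
    have hv : v.1 ≠ y := fun hvy => u.2 (hy (hvy ▸ (comap_adj.mp h).symm))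
    have huv : (G.induce (insert y S)ᶜ).Adj
        ⟨u, fun hm => hm.elim hu u.2⟩ ⟨v, fun hm => hm.elim hv v.2⟩ :=
      comap_adj.mpr (comap_adj.mp h)
    exact huv.reachable.trans (ih hv hw)

lemma separatesFrom_of_isCompOf_compl_insert (hy : lk G y ⊆ S) {Y : Set V}
    (hY : IsCompOf G (insert y S)ᶜ Y) {z v : V} (hz : z ∈ Y) (hvY : v ∉ Y)
    (hv : v ∉ insert y S) : SeparatesFrom G S z v := by
  have hzy : z ∉ insert y S := hY.2.1 hz
  refine ⟨fun h => hzy (.inr h), fun h => hv (.inr h), fun hr => hvY ?_⟩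
  exact (hY.2.2 ⟨z, hzy⟩ hz ⟨v, hv⟩).mp
    (reachable_induce_compl_insert hy hr (fun h => hzy (.inl h)) (fun h => hv (.inl h)))

lemma separatesFrom_of_lk_subset (hy : lk G y ⊆ S) (hyS : y ∉ S) {z : V}
    (hz : z ∉ insert y S) : SeparatesFrom G S z y :=
  ⟨fun h => hz (.inr h), hyS,
    not_reachable_induce_compl_of_lk_subset hy hyS (u := ⟨z, _⟩) fun h => hz (.inl h)⟩

end

theorem sepIntLinks_of_nonadj_dominates_general (G : SimpleGraph V) (x y : V)
    (hxy : x ≠ y) (hadj : ¬ G.Adj x y) (hdom : Dominates G x y)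
    (hsep : ∃ Y1 Y2 : Set V, IsCompOf G ((st G y)ᶜ) Y1 ∧ IsCompOf G ((st G y)ᶜ) Y2 ∧
      Y1 ≠ Y2) :
    SepIntLinks G := by
  have hinter : lk G x ∩ lk G y = lk G y :=
    Set.inter_eq_self_of_subset_right (lk_subset_lk_of_dominates hadj hdom)
  have hx : x ∉ st G y := fun h => h.elim hxy fun h => hadj h.symm
  obtain ⟨Y, hY, hxY⟩ := exists_isCompOf_not_mem hsep x
  obtain ⟨z, hz⟩ := hY.1
  refine ⟨x, y, hxy, hadj, z, ?_, ?_⟩ <;> rw [hinter]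
  · exact separatesFrom_of_isCompOf_compl_insert subset_rfl hY hz hxY hx
  · exact separatesFrom_of_lk_subset subset_rfl G.irrefl (hY.2.1 hz)

/-- If `x, y` are non-adjacent vertices with `x ≥ y` and the induced
subgraph on the complement of `st y` is disconnected (has at least two connected
components), then `Γ` contains a separating intersection of links. -/
theorem sepIntLinks_of_nonadj_dominates [Fintype V] (G : SimpleGraph V) (x y : V)
    (hxy : x ≠ y) (hadj : ¬ G.Adj x y) (hdom : Dominates G x y)
    (hsep : ∃ Y1 Y2 : Set V, IsCompOf G ((st G y)ᶜ) Y1 ∧ IsCompOf G ((st G y)ᶜ) Y2 ∧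
      Y1 ≠ Y2) :
    SepIntLinks G :=
  sepIntLinks_of_nonadj_dominates_general G x y hxy hadj hdom hsep
end

section
/- Suppose the finite simplicial graph Γ does not contain a separating intersection of links. Let α and β be automorphisms of A_Γ, each of which is either a partial conjugation or a transvection, with multipliers x^{±1} and y^{±1} respectively (x, y vertices of Γ). If α fixes the generator y and β fixes the generator x, then α and β commute in Aut(A_Γ). -/
open SimpleGraph
open scoped commutatorElement

variable {V : Type*}

/-- `φ` is a transvection or a non-inner partial conjugation with multiplier `x^{±1}`. -/
def IsTvOrPcWithMult (G : SimpleGraph V) (φ : MulAut (RAAG G)) (x : V) : Prop :=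
  (∃ ε z, IsTransvection G φ x z ε) ∨ (∃ ε Y, IsPartialConj G φ x ε Y)

/-!
Each of `α`, `β` multiplies the generators of its support (the transvected vertex, or the
conjugated component) by powers of its multiplier on both sides and fixes all other generators,
so they commute on every generator moved by at most one of them. If a generator `w` is moved
by both, the multipliers `x`, `y` commute: otherwise they are distinct and non-adjacent, the
fixing hypotheses keep `y` out of the support of `α` and `x` out of that of `β`, and the
component of `w` in the complement of `lk x ∩ lk y` stays inside both supports, so
`lk x ∩ lk y` would be a separating intersection of links.
-/

theorem SimpleGraph.Reachable.mem_of_adj_closed {W : Type*} {H : SimpleGraph W} {S : Set W}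
    (hS : ∀ a b, H.Adj a b → a ∈ S → b ∈ S) {a b : W} (h : H.Reachable a b)
    (ha : a ∈ S) : b ∈ S := by
  rw [reachable_iff_reflTransGen] at h
  induction h with
  | refl => exact ha
  | tail _ hbc ih => exact hS _ _ hbc ih

section Graph

variable {G : SimpleGraph V}

lemma IsCompOf.mem_of_adj {S Y : Set V} (hY : IsCompOf G S Y) {a b : V} (ha : a ∈ Y)
    (hb : b ∈ S) (hab : G.Adj a b) : b ∈ Y :=
  (hY.2.2 ⟨a, hY.2.1 ha⟩ ha ⟨b, hb⟩).mp (Adj.reachable (by simpa using hab))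

/-- Both the target of a transvection with multiplier `x` and a component of `(st x)ᶜ` are
link-closed for `x`. -/
def LinkClosed (G : SimpleGraph V) (x : V) (M : Set V) : Prop :=
  ∀ a ∈ M, lk G a ⊆ st G x ∪ M

lemma LinkClosed.notMem_st {x y : V} {N : Set V} (hN : LinkClosed G y N) (hxN : x ∉ N)
    (hx : x ∉ st G y) {b : V} (hb : b ∈ N) : b ∉ st G x := by
  rintro (rfl | hxb)
  · exact hxN hb
  · rcases hN b hb hxb.symm with h | h
    exacts [hx h, hxN h]

/-- The component of `w` in the complement of `lk x ∩ lk y` stays inside `M ∩ N`, so it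
misses `y ∉ M` and `x ∉ N`. -/
lemma sepIntLinks_of_mem_linkClosed {x y w : V} {M N : Set V} (hM : LinkClosed G x M)
    (hN : LinkClosed G y N) (hxy : x ≠ y) (hadj : ¬ G.Adj x y) (hyM : y ∉ M) (hxN : x ∉ N)
    (hwM : w ∈ M) (hwN : w ∈ N) : SepIntLinks G := by
  have hx_sty : x ∉ st G y := by
    rintro (h | h)
    exacts [hxy h, hadj h.symm]
  have hy_stx : y ∉ st G x := by
    rintro (h | h)
    exacts [hxy h.symm, hadj h]
  have hclosed : ∀ a b : ((lk G x ∩ lk G y)ᶜ : Set V),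
      (G.induce (lk G x ∩ lk G y)ᶜ).Adj a b → a.1 ∈ M ∩ N → b.1 ∈ M ∩ N := by
    rintro ⟨a, _⟩ ⟨b, hbL⟩ hab ⟨haM, haN⟩
    have hab : G.Adj a b := by simpa using hab
    rcases hM a haM hab with hbx | hbM <;> rcases hN a haN hab with hby | hbN
    · exfalso
      rcases hbx with rfl | hbx
      · exact hx_sty hby
      rcases hby with rfl | hby
      exacts [hy_stx (Or.inr hbx), hbL ⟨hbx, hby⟩]
    · exact absurd hbx (hN.notMem_st hxN hx_sty hbN)
    · exact absurd hby (hM.notMem_st hyM hy_stx hbM)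
    · exact ⟨hbM, hbN⟩
  have hwL : w ∉ lk G x ∩ lk G y := fun h => hN.notMem_st hxN hx_sty hwN (Or.inr h.1)
  have hxL : x ∉ lk G x ∩ lk G y := fun h => G.loopless.irrefl x h.1
  have hyL : y ∉ lk G x ∩ lk G y := fun h => G.loopless.irrefl y h.2
  have hstay : ∀ t (ht : t ∉ lk G x ∩ lk G y),
      (G.induce (lk G x ∩ lk G y)ᶜ).Reachable ⟨w, hwL⟩ ⟨t, ht⟩ → t ∈ M ∩ N :=
    fun _ _ h => h.mem_of_adj_closed (S := Subtype.val ⁻¹' (M ∩ N)) hclosed ⟨hwM, hwN⟩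
  exact ⟨x, y, hxy, hadj, w, ⟨hwL, hxL, fun h => hxN (hstay x hxL h).2⟩,
    ⟨hwL, hyL, fun h => hyM (hstay y hyL h).1⟩⟩

end Graph

lemma apply_apply_comm_of_fixed {H : Type*} [Group H] {α β : MulAut H} {y g : H}
    (hαy : α y = y) (hαg : α g = g) {c d : ℤ} (hβg : β g = y ^ c * g * y ^ d) :
    α (β g) = β (α g) := by
  simp [hβg, hαy, hαg]

lemma apply_apply_comm_of_commute {H : Type*} [Group H] {α β : MulAut H} {x y g : H}
    (hxy : Commute x y) (hαy : α y = y) (hβx : β x = x) {a b c d : ℤ}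
    (hαg : α g = x ^ a * g * x ^ b) (hβg : β g = y ^ c * g * y ^ d) :
    α (β g) = β (α g) := by
  simp only [hαg, hβg, map_mul, map_zpow, hαy, hβx, mul_assoc]
  rw [(hxy.zpow_zpow b d).eq, (hxy.zpow_zpow a c).symm.left_comm]

section RAAG

variable {G : SimpleGraph V}

lemma commute_gen_of_adj {x y : V} (h : G.Adj x y) : Commute (gen G x) (gen G y) := by
  rw [← commutatorElement_eq_one_iff_commute]
  exact (QuotientGroup.eq_one_iff _).mpr (Subgroup.subset_normalClosure ⟨x, y, h, rfl⟩)

/-- The exponent sum is a homomorphism onto `ℤ`. -/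
lemma gen_zpow_ne_one (x : V) {n : ℤ} (hn : n ≠ 0) : gen G x ^ n ≠ 1 := by
  have hrels : ∀ r ∈ raagRels G,
      FreeGroup.lift (fun _ => Multiplicative.ofAdd (1 : ℤ)) r = 1 := by
    rintro r ⟨a, b, -, rfl⟩
    rw [map_commutatorElement]
    exact commutatorElement_eq_one_iff_commute.mpr (Commute.all _ _)
  intro h
  apply hn
  simpa [gen] using congrArg (PresentedGroup.toGroup hrels) h

lemma mulAut_ext_gen {φ ψ : MulAut (RAAG G)} (h : ∀ v, φ (gen G v) = ψ (gen G v)) : φ = ψ :=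
  MulEquiv.toMonoidHom_injective (PresentedGroup.ext h)

/-- The common shape of a transvection or partial conjugation with multiplier `x`; `M` is its
support (the transvected vertex, or the conjugated component). -/
structure ActsByMultiplierOn (G : SimpleGraph V) (φ : MulAut (RAAG G)) (x : V) (M : Set V) :
    Prop where
  linkClosed : LinkClosed G x M
  apply_of_notMem : ∀ w ∉ M, φ (gen G w) = gen G w
  apply_of_mem : ∀ w ∈ M, ∃ a b : ℤ, φ (gen G w) = gen G x ^ a * gen G w * gen G x ^ b
  commute_of_apply_eq : ∀ w ∈ M, φ (gen G w) = gen G w → Commute (gen G x) (gen G w)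

lemma IsTransvection.actsByMultiplierOn {φ : MulAut (RAAG G)} {x u : V} {ε : ℤ}
    (h : IsTransvection G φ x u ε) : ActsByMultiplierOn G φ x {u} := by
  obtain ⟨-, hdom, hε, hu, hfix⟩ := h
  have hxε : gen G x ^ ε ≠ 1 := gen_zpow_ne_one x (by rcases hε with rfl | rfl <;> decide)
  refine ⟨?_, hfix, ?_, ?_⟩
  · rintro a rfl
    exact hdom.trans Set.subset_union_left
  · rintro w rfl
    rcases hu with hu | hu
    exacts [⟨0, ε, by simp [hu]⟩, ⟨ε, 0, by simp [hu]⟩]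
  · rintro w rfl hw
    rcases hu with hu | hu <;> rw [hu] at hw
    exacts [absurd (mul_eq_left.mp hw) hxε, absurd (mul_eq_right.mp hw) hxε]

lemma IsPartialConj.actsByMultiplierOn {φ : MulAut (RAAG G)} {x : V} {ε : ℤ} {Y : Set V}
    (h : IsPartialConj G φ x ε Y) : ActsByMultiplierOn G φ x Y := by
  obtain ⟨hε, hY, -, hconj, hfix⟩ := h
  refine ⟨fun a ha b hb => ?_, hfix, fun w hw => ⟨-ε, ε, hconj w hw⟩, fun w hw hw' => ?_⟩
  · by_cases hbx : b ∈ st G x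
    exacts [Or.inl hbx, Or.inr (hY.mem_of_adj ha hbx hb)]
  · have hc : Commute (gen G x ^ ε) (gen G w) := by
      have := hconj w hw
      rwa [hw', zpow_neg, mul_assoc, eq_inv_mul_iff_mul_eq] at this
    rcases hε with rfl | rfl <;> simpa using hc

lemma IsTvOrPcWithMult.exists_actsByMultiplierOn {φ : MulAut (RAAG G)} {x : V}
    (h : IsTvOrPcWithMult G φ x) : ∃ M, ActsByMultiplierOn G φ x M := by
  rcases h with ⟨ε, u, h⟩ | ⟨ε, Y, h⟩
  exacts [⟨_, h.actsByMultiplierOn⟩, ⟨_, h.actsByMultiplierOn⟩]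

namespace ActsByMultiplierOn

variable {α β : MulAut (RAAG G)} {x y : V} {M N : Set V}

lemma exists_apply_eq (h : ActsByMultiplierOn G α x M) (w : V) :
    ∃ a b : ℤ, α (gen G w) = gen G x ^ a * gen G w * gen G x ^ b := by
  by_cases hw : w ∈ M
  · exact h.apply_of_mem w hw
  · exact ⟨0, 0, by simp [h.apply_of_notMem w hw]⟩

lemma commute_gen_of_mem (hG : ¬ SepIntLinks G) (hα : ActsByMultiplierOn G α x M)
    (hβ : ActsByMultiplierOn G β y N) (hαy : α (gen G y) = gen G y)
    (hβx : β (gen G x) = gen G x) {w : V} (hwM : w ∈ M) (hwN : w ∈ N) :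
    Commute (gen G x) (gen G y) := by
  by_contra hc
  have hxy : x ≠ y := by
    rintro rfl
    exact hc (Commute.refl _)
  have hadj : ¬ G.Adj x y := fun h => hc (commute_gen_of_adj h)
  have hyM : y ∉ M := fun hy => hc (hα.commute_of_apply_eq y hy hαy)
  have hxN : x ∉ N := fun hx => hc (hβ.commute_of_apply_eq x hx hβx).symm
  exact hG (sepIntLinks_of_mem_linkClosed hα.linkClosed hβ.linkClosed hxy hadj hyM hxN hwM hwN)

lemma mul_comm (hG : ¬ SepIntLinks G) (hα : ActsByMultiplierOn G α x M)
    (hβ : ActsByMultiplierOn G β y N) (hαy : α (gen G y) = gen G y)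
    (hβx : β (gen G x) = gen G x) : α * β = β * α := by
  refine mulAut_ext_gen fun w => ?_
  obtain ⟨a, b, hαw⟩ := hα.exists_apply_eq w
  obtain ⟨c, d, hβw⟩ := hβ.exists_apply_eq w
  by_cases hwM : w ∈ M
  · by_cases hwN : w ∈ N
    · exact apply_apply_comm_of_commute (hα.commute_gen_of_mem hG hβ hαy hβx hwM hwN)
        hαy hβx hαw hβw
    · exact (apply_apply_comm_of_fixed hβx (hβ.apply_of_notMem w hwN) hαw).symm
  · exact apply_apply_comm_of_fixed hαy (hα.apply_of_notMem w hwM) hβw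

end ActsByMultiplierOn

end RAAG

theorem commute_of_fix_multipliers_general (G : SimpleGraph V)
    (h : ¬ SepIntLinks G) (α β : MulAut (RAAG G)) (x y : V)
    (hα : IsTvOrPcWithMult G α x) (hβ : IsTvOrPcWithMult G β y)
    (hαy : α (gen G y) = gen G y) (hβx : β (gen G x) = gen G x) :
    α * β = β * α := by
  obtain ⟨M, hM⟩ := hα.exists_actsByMultiplierOn
  obtain ⟨N, hN⟩ := hβ.exists_actsByMultiplierOn
  exact hM.mul_comm h hN hαy hβx

/-- If `Γ` has no separating intersection of links and `α, β` are
transvections or partial conjugations with multipliers `x^{±1}`, `y^{±1}` which fix each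
other's multipliers, then `α` and `β` commute in `Aut(A_Γ)`. -/
theorem commute_of_fix_multipliers [Fintype V] (G : SimpleGraph V)
    (h : ¬ SepIntLinks G) (α β : MulAut (RAAG G)) (x y : V)
    (hα : IsTvOrPcWithMult G α x) (hβ : IsTvOrPcWithMult G β y)
    (hαy : α (gen G y) = gen G y) (hβx : β (gen G x) = gen G x) :
    α * β = β * α :=
  commute_of_fix_multipliers_general G h α β x y hα hβ hαy hβx
end

section
/- If the finite simplicial graph Γ is disconnected (and has at least two vertices), then Γ contains a domination-equivalent pair of vertices or a separating intersection of links. -/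
/-!
Two distinct non-adjacent vertices `a, b` of one component are separated by `lk a ∩ lk b`
from any vertex `z` of another component, since `z` cannot reach them even in `Γ` itself.
If there is no such pair, every component is a clique, so two adjacent vertices have the same
star and are domination equivalent; and if `Γ` has no edges at all, any two vertices are.
-/

open SimpleGraph
open scoped commutatorElement

variable {V : Type*}

variable {G : SimpleGraph V}

lemma SimpleGraph.exists_not_reachable_of_not_reachable {u v : V} (huv : ¬ G.Reachable u v)
    (a : V) : ∃ z, ¬ G.Reachable z a := by
  by_cases hua : G.Reachable u a
  · exact ⟨v, fun hva => huv (hua.trans hva.symm)⟩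
  · exact ⟨u, hua⟩

lemma separatesFrom_of_not_reachable {S : Set V} {u v : V} (hu : u ∉ S) (hv : v ∉ S)
    (huv : ¬ G.Reachable u v) : SeparatesFrom G S u v :=
  ⟨hu, hv, fun h => huv (h.map (Embedding.induce Sᶜ).toHom)⟩

lemma notMem_lk_self (x : V) : x ∉ lk G x := G.loopless.irrefl x

lemma sepIntLinks_of_not_reachable {a b z : V} (hab : a ≠ b) (hnadj : ¬ G.Adj a b)
    (hreach : G.Reachable a b) (hza : ¬ G.Reachable z a) : SepIntLinks G := by
  have hz : z ∉ lk G a ∩ lk G b := fun hz => hza (G.adj_symm hz.1).reachable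
  have hzb : ¬ G.Reachable z b := fun hzb => hza (hzb.trans hreach.symm)
  exact ⟨a, b, hab, hnadj, z,
    separatesFrom_of_not_reachable hz (fun h => notMem_lk_self a h.1) hza,
    separatesFrom_of_not_reachable hz (fun h => notMem_lk_self b h.2) hzb⟩

lemma dominates_of_adj (hclique : ∀ a b, a ≠ b → G.Reachable a b → G.Adj a b) {x y : V}
    (hxy : G.Adj x y) : Dominates G x y := by
  intro w (hyw : G.Adj y w)
  by_cases hwx : w = x
  · exact Or.inl hwx
  · exact Or.inr (hclique x w (Ne.symm hwx) (hxy.reachable.trans hyw.reachable))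

lemma dominates_of_isolated {x : V} (hx : ∀ w, ¬ G.Adj x w) (y : V) : Dominates G y x :=
  fun w hw => absurd hw (hx w)

theorem domEquiv_or_sepIntLinks_of_disconnected_general (G : SimpleGraph V)
    (h : ∃ u v : V, ¬ G.Reachable u v) :
    DomEquivPair G ∨ SepIntLinks G := by
  obtain ⟨u, v, huv⟩ := h
  by_cases hsep : ∃ a b, a ≠ b ∧ ¬ G.Adj a b ∧ G.Reachable a b
  · obtain ⟨a, b, hab, hnadj, hreach⟩ := hsep
    obtain ⟨z, hza⟩ := exists_not_reachable_of_not_reachable huv a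
    exact Or.inr (sepIntLinks_of_not_reachable hab hnadj hreach hza)
  · have hclique : ∀ a b, a ≠ b → G.Reachable a b → G.Adj a b := fun a b hab hreach =>
      by_contra fun hnadj => hsep ⟨a, b, hab, hnadj, hreach⟩
    left
    by_cases hedge : ∃ x y, G.Adj x y
    · obtain ⟨x, y, hxy⟩ := hedge
      exact ⟨x, y, hxy.ne, dominates_of_adj hclique hxy, dominates_of_adj hclique hxy.symm⟩
    · push Not at hedge
      exact ⟨u, v, fun e => huv (e ▸ Reachable.refl u),
        dominates_of_isolated (hedge v) u, dominates_of_isolated (hedge u) v⟩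

/-- If `Γ` is disconnected (it has two vertices not joined by any
path), then `Γ` contains a domination-equivalent pair of vertices or a separating
intersection of links. -/
theorem domEquiv_or_sepIntLinks_of_disconnected [Fintype V] (G : SimpleGraph V)
    (h : ∃ u v : V, ¬ G.Reachable u v) :
    DomEquivPair G ∨ SepIntLinks G :=
  domEquiv_or_sepIntLinks_of_disconnected_general G h
end

section
/- If the finite simplicial graph Γ is connected and contains a vertex z such that the induced subgraph on the complement of {z} has at least three connected components, then Γ contains a separating intersection of links. -/
open SimpleGraph

variable {V : Type*}

open scoped commutatorElement

/-! Pick neighbours `x, y` of the cut vertex `z` in two components of `Γ - z`: then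
`lk x ∩ lk y = {z}`, and any vertex of a third component is cut off from both `x` and `y`. -/

namespace IsCompOf

variable {G : SimpleGraph V} {S Y Y₁ Y₂ : Set V}

theorem eq_of_mem_s15 (h₁ : IsCompOf G S Y₁) (h₂ : IsCompOf G S Y₂) {a : V}
    (ha₁ : a ∈ Y₁) (ha₂ : a ∈ Y₂) : Y₁ = Y₂ := by
  have haS : a ∈ S := h₁.2.1 ha₁
  ext b
  by_cases hbS : b ∈ S
  · rw [← h₁.2.2 ⟨a, haS⟩ ha₁ ⟨b, hbS⟩, h₂.2.2 ⟨a, haS⟩ ha₂ ⟨b, hbS⟩]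
  · exact iff_of_false (fun hb => hbS (h₁.2.1 hb)) (fun hb => hbS (h₂.2.1 hb))

theorem not_reachable_of_ne (h₁ : IsCompOf G S Y₁) (h₂ : IsCompOf G S Y₂) (hne : Y₁ ≠ Y₂)
    {a b : S} (ha : a.1 ∈ Y₁) (hb : b.1 ∈ Y₂) : ¬ (G.induce S).Reachable a b :=
  fun hab => hne (h₁.eq_of_mem_s15 h₂ ((h₁.2.2 a ha b).mp hab) hb)

theorem exists_adj_notMem (hY : IsCompOf G S Y) (hc : G.Connected) (hS : ∃ v, v ∉ S) :
    ∃ a ∈ Y, ∃ b ∉ S, G.Adj a b := by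
  obtain ⟨y, hy⟩ := hY.1
  obtain ⟨v, hv⟩ := hS
  obtain ⟨p⟩ := hc.preconnected y v
  obtain ⟨d, -, hd₁, hd₂⟩ := p.exists_boundary_dart Y hy (fun hvY => hv (hY.2.1 hvY))
  refine ⟨d.fst, hd₁, d.snd, fun hdS => hd₂ ?_, d.adj⟩
  have hadj : (G.induce S).Adj ⟨d.fst, hY.2.1 hd₁⟩ ⟨d.snd, hdS⟩ := d.adj
  exact (hY.2.2 _ hd₁ ⟨d.snd, hdS⟩).mp hadj.reachable

theorem exists_adj_of_compl_singleton {z : V} (hY : IsCompOf G ({z} : Set V)ᶜ Y)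
    (hc : G.Connected) : ∃ x ∈ Y, G.Adj x z := by
  obtain ⟨x, hx, b, hb, hxb⟩ := hY.exists_adj_notMem hc ⟨z, not_not_intro rfl⟩
  rw [Set.notMem_compl_iff, Set.mem_singleton_iff] at hb
  exact ⟨x, hx, hb ▸ hxb⟩

section distinct

variable (h₁ : IsCompOf G S Y₁) (h₂ : IsCompOf G S Y₂) (hne : Y₁ ≠ Y₂)
  {x y : V} (hx : x ∈ Y₁) (hy : y ∈ Y₂)
include h₁ h₂ hne hx hy

theorem ne_of_mem_of_mem : x ≠ y := by
  rintro rfl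
  exact hne (h₁.eq_of_mem_s15 h₂ hx hy)

theorem not_adj_of_mem_of_mem : ¬ G.Adj x y := by
  intro hxy
  have hxy' : (G.induce S).Adj ⟨x, h₁.2.1 hx⟩ ⟨y, h₂.2.1 hy⟩ := hxy
  exact h₁.not_reachable_of_ne h₂ hne hx hy hxy'.reachable

theorem lk_inter_lk_subset_compl : lk G x ∩ lk G y ⊆ Sᶜ := by
  rintro u ⟨hxu, hyu⟩ huS
  have hxu' : (G.induce S).Adj ⟨x, h₁.2.1 hx⟩ ⟨u, huS⟩ := hxu
  have huy' : (G.induce S).Adj ⟨u, huS⟩ ⟨y, h₂.2.1 hy⟩ := hyu.symm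
  exact h₁.not_reachable_of_ne h₂ hne hx hy (hxu'.reachable.trans huy'.reachable)

end distinct

theorem separatesFrom {T : Set V} (h₁ : IsCompOf G Tᶜ Y₁) (h₂ : IsCompOf G Tᶜ Y₂)
    (hne : Y₁ ≠ Y₂) {a b : V} (ha : a ∈ Y₁) (hb : b ∈ Y₂) : SeparatesFrom G T a b :=
  ⟨h₁.2.1 ha, h₂.2.1 hb, h₁.not_reachable_of_ne h₂ hne ha hb⟩

end IsCompOf

theorem sepIntLinks_of_cut_vertex_general (G : SimpleGraph V)
    (hc : G.Connected)
    (h : ∃ z : V, ∃ Y1 Y2 Y3 : Set V,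
        IsCompOf G (({z} : Set V)ᶜ) Y1 ∧ IsCompOf G (({z} : Set V)ᶜ) Y2 ∧
        IsCompOf G (({z} : Set V)ᶜ) Y3 ∧ Y1 ≠ Y2 ∧ Y1 ≠ Y3 ∧ Y2 ≠ Y3) :
    SepIntLinks G := by
  obtain ⟨z, Y1, Y2, Y3, h1, h2, h3, h12, h13, h23⟩ := h
  obtain ⟨x, hx, hxz⟩ := h1.exists_adj_of_compl_singleton hc
  obtain ⟨y, hy, hyz⟩ := h2.exists_adj_of_compl_singleton hc
  obtain ⟨w, hw⟩ := h3.1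
  have hlk : lk G x ∩ lk G y = {z} := by
    refine Set.Subset.antisymm ?_ (Set.singleton_subset_iff.mpr ⟨hxz, hyz⟩)
    simpa using h1.lk_inter_lk_subset_compl h2 h12 hx hy
  refine ⟨x, y, h1.ne_of_mem_of_mem h2 h12 hx hy, h1.not_adj_of_mem_of_mem h2 h12 hx hy,
    w, ?_, ?_⟩
  · rw [hlk]
    exact h3.separatesFrom h1 h13.symm hw hx
  · rw [hlk]
    exact h3.separatesFrom h2 h23.symm hw hy

/-- If `Γ` is connected and contains a vertex `z` such that the induced
subgraph on the complement of `{z}` has at least three connected components, then `Γ`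
contains a separating intersection of links. -/
theorem sepIntLinks_of_cut_vertex [Fintype V] (G : SimpleGraph V)
    (hc : G.Connected)
    (h : ∃ z : V, ∃ Y1 Y2 Y3 : Set V,
        IsCompOf G (({z} : Set V)ᶜ) Y1 ∧ IsCompOf G (({z} : Set V)ᶜ) Y2 ∧
        IsCompOf G (({z} : Set V)ᶜ) Y3 ∧ Y1 ≠ Y2 ∧ Y1 ≠ Y3 ∧ Y2 ≠ Y3) :
    SepIntLinks G :=
  sepIntLinks_of_cut_vertex_general G hc h
end
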